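/- arXiv:2503.03033 — 5 statements merged into one kernel-verified Lean document; each statement's English description precedes it below -/
import Mathlib

section
/- Let n, k be positive integers, g = gcd(n, k), and let w be a primitive (n/g)-th root of unity. Then the number of primitive n-th roots of unity z with z^k = w equals φ(n)/φ(n/g). -/
open Finset

/-- For a surjective homomorphism of finite groups, each fiber has cardinality
`Nat.card G / Nat.card H`. -/
lemma fiber_card_mul {G H : Type*} [Group G] [Group H] [Fintype G] [DecidableEq H]
    (f : G →* H) (hf : Function.Surjective f) (h0 : H) :
    (Finset.univ.filter (fun g => f g = h0)).card * Nat.card H = Nat.card G := by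
  obtain ⟨x0, hx0⟩ := hf h0
  have hbij : (Finset.univ.filter (fun g => f g = h0)).card
      = (Finset.univ.filter (fun g : G => f g = 1)).card := by
    apply Finset.card_bij (fun g _ => g * x0⁻¹)
    · intro g hg
      simp only [Finset.mem_filter, Finset.mem_univ, true_and] at hg ⊢
      rw [map_mul, map_inv, hg, hx0, mul_inv_cancel]
    · intro g₁ _ g₂ _ h
      exact mul_right_cancel h
    · intro g hg
      simp only [Finset.mem_filter, Finset.mem_univ, true_and] at hg
      exact ⟨g * x0, by simp [map_mul, hg, hx0], by simp⟩
  have hker : (Finset.univ.filter (fun g : G => f g = 1)).card = Nat.card f.ker := by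
    rw [Nat.card_congr (Equiv.subtypeEquivRight (fun x => (f.mem_ker (x := x)))),
      Nat.card_eq_fintype_card, Fintype.card_subtype]
  have h1 : Nat.card G = Nat.card (G ⧸ f.ker) * Nat.card f.ker :=
    Subgroup.card_eq_card_quotient_mul_card_subgroup _
  have h2 : Nat.card (G ⧸ f.ker) = Nat.card H :=
    Nat.card_congr (QuotientGroup.quotientKerEquivOfSurjective f hf).toEquiv
  rw [hbij, hker, h1, h2, mul_comm]

theorem card_primitiveRoots_pow_eq (n k : ℕ) (hn : 0 < n) (hk : 0 < k)
    (w : ℂ) (hw : IsPrimitiveRoot w (n / Nat.gcd n k)) :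
    (((primitiveRoots n ℂ).filter (fun z => z ^ k = w)).card : ℚ) =
      (Nat.totient n : ℚ) / (Nat.totient (n / Nat.gcd n k) : ℚ) := by
  set g := Nat.gcd n k with hgdef
  have hg : 0 < g := Nat.gcd_pos_of_pos_left k hn
  set m := n / g with hmdef
  have hgn : g ∣ n := Nat.gcd_dvd_left n k
  have hgk : g ∣ k := Nat.gcd_dvd_right n k
  have hnm : n = g * m := (Nat.mul_div_cancel' hgn).symm
  have hm : 0 < m := Nat.div_pos (Nat.le_of_dvd hn hgn) hg
  have hmn : m ∣ n := Nat.div_dvd_of_dvd hgn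
  haveI : NeZero n := ⟨hn.ne'⟩
  haveI : NeZero m := ⟨hm.ne'⟩
  set c := k / g with hcdef
  have hkc : k = g * c := (Nat.mul_div_cancel' hgk).symm
  have hc : Nat.Coprime c m := (Nat.coprime_div_gcd_div_gcd hg).symm
  set ζ := Complex.exp (2 * Real.pi * Complex.I / n) with hζdef
  have hζ : IsPrimitiveRoot ζ n := Complex.isPrimitiveRoot_exp n hn.ne'
  have hζm : IsPrimitiveRoot (ζ ^ g) m := hζ.pow hn hnm
  obtain ⟨b, hbm, hb, hbw⟩ := hζm.isPrimitiveRoot_iff.mp hw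
  have horder : orderOf ζ = n := hζ.eq_orderOf.symm
  have hpow : ∀ x y : ℕ, (ζ ^ x = ζ ^ y ↔ x ≡ y [MOD n]) := by
    intro x y
    constructor
    · intro h
      have hx := pow_mod_orderOf ζ x
      have hy := pow_mod_orderOf ζ y
      rw [horder] at hx hy
      have h' : ζ ^ (x % n) = ζ ^ (y % n) := by rw [hx, hy, h]
      exact hζ.pow_inj (Nat.mod_lt _ hn) (Nat.mod_lt _ hn) h'
    · intro h
      have hx := pow_mod_orderOf ζ x
      have hy := pow_mod_orderOf ζ y
      rw [horder] at hx hy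
      rw [← hx, ← hy, h]
  have key : ∀ a : ℕ, ((ζ ^ a) ^ k = w ↔ a * c ≡ b [MOD m]) := by
    intro a
    rw [← hbw, ← pow_mul, ← pow_mul, hpow]
    rw [hkc, hnm]
    have : a * (g * c) = g * (a * c) := by ring
    rw [this]
    exact Nat.ModEq.mul_left_cancel_iff' hg.ne'
  let ub : (ZMod m)ˣ := ZMod.unitOfCoprime b hb
  let uc : (ZMod m)ˣ := ZMod.unitOfCoprime c hc
  let f : (ZMod n)ˣ →* (ZMod m)ˣ := ZMod.unitsMap hmn
  have hfs : Function.Surjective f := ZMod.unitsMap_surjective hmn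
  have keyu : ∀ u : (ZMod n)ˣ, (f u = ub * uc⁻¹ ↔ (u : ZMod n).val * c ≡ b [MOD m]) := by
    intro u
    rw [eq_mul_inv_iff_mul_eq, Units.ext_iff, Units.val_mul]
    have hfu : ((f u : (ZMod m)ˣ) : ZMod m) = (((u : ZMod n).val : ℕ) : ZMod m) := by
      show ((ZMod.unitsMap hmn u : (ZMod m)ˣ) : ZMod m) = _
      rw [ZMod.unitsMap_def, Units.coe_map]
      show ZMod.castHom hmn (ZMod m) (u : ZMod n) = _
      rw [ZMod.castHom_apply, ← ZMod.natCast_val]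
    rw [hfu, ZMod.coe_unitOfCoprime, ZMod.coe_unitOfCoprime, ← Nat.cast_mul,
      ZMod.natCast_eq_natCast_iff]
  have hcard : ((primitiveRoots n ℂ).filter (fun z => z ^ k = w)).card
      = (Finset.univ.filter (fun u : (ZMod n)ˣ => f u = ub * uc⁻¹)).card := by
    symm
    refine Finset.card_bij (fun u _ => ζ ^ (u : ZMod n).val) ?_ ?_ ?_
    · intro u hu
      simp only [Finset.mem_filter, Finset.mem_univ, true_and] at hu ⊢
      exact ⟨(mem_primitiveRoots hn).2 (hζ.pow_of_coprime _ (ZMod.val_coe_unit_coprime u)),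
        (key _).2 ((keyu u).1 hu)⟩
    · intro u _ v _ h
      have := hζ.pow_inj (ZMod.val_lt _) (ZMod.val_lt _) h
      exact Units.ext (ZMod.val_injective n this)
    · intro z hz
      simp only [Finset.mem_filter] at hz
      obtain ⟨i, hin, hi, hiz⟩ := hζ.isPrimitiveRoot_iff.mp
        ((mem_primitiveRoots hn).1 hz.1)
      have hval : ((ZMod.unitOfCoprime i hi : ZMod n)).val = i := by
        rw [ZMod.coe_unitOfCoprime, ZMod.val_natCast, Nat.mod_eq_of_lt hin]
      refine ⟨ZMod.unitOfCoprime i hi, ?_, by simp only [hval]; exact hiz⟩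
      simp only [Finset.mem_filter, Finset.mem_univ, true_and]
      rw [keyu, hval]
      exact (key i).1 (by rw [hiz]; exact hz.2)
  have hfc := fiber_card_mul f hfs (ub * uc⁻¹)
  rw [Nat.card_eq_fintype_card, Nat.card_eq_fintype_card, ZMod.card_units_eq_totient,
    ZMod.card_units_eq_totient] at hfc
  have hmtot : (Nat.totient m : ℚ) ≠ 0 :=
    Nat.cast_ne_zero.2 (Nat.totient_pos.2 hm).ne'
  rw [hcard, eq_div_iff hmtot]
  exact_mod_cast hfc
end

section
/- With ν_{β,n} as above and ω_k(z) = z^k the k-th power map on the n-th roots of unity, the pushforward satisfies ω_{k*} ν_{β,n} = ν_{β, n/gcd(n,k)}; that is, for every root of unity w whose order divides n/gcd(n,k), ∑_{z : z^n = 1, z^k = w} ν_{β,n}({z}) = ν_{β,n/gcd(n,k)}({w}). -/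
open Polynomial

/-- Generalized totient function: `φ_β(d) = d^β ∏_{p | d} (1 − p^{-β})`. -/
noncomputable def phiBeta (β : ℝ) (d : ℕ) : ℝ :=
  (d : ℝ) ^ β * ∏ p ∈ d.primeFactors, (1 - (p : ℝ) ^ (-β))

/-- The weight of `ν_{β,m}` at a root of unity `z`. -/
noncomputable def nuWeight (β : ℝ) (m : ℕ) (z : ℂ) : ℝ :=
  (m : ℝ) ^ (-β) * phiBeta β (orderOf z) / (Nat.totient (orderOf z) : ℝ)

/-!
Write `ν_{β,n}({z}) = n^{-β} f_β(ord z)` with `f_β = φ_β / φ` (`nuDensity`). Power maps compose,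
`ω_{ab} = ω_b ∘ ω_a`, and `n / gcd(n, ab) = n' / gcd(n', b)` for `n' = n / gcd(n, a)`, so it
suffices to push forward along `ω_p` for a prime `p`. If `p ∤ n`, then `ω_p` permutes the `n`-th
roots of unity and preserves orders. If `n = p m`, the fibre over `w` (of order `d ∣ m`) is the set
of all `p` complex `p`-th roots of `w`: they all have order `p d` when `p ∣ d`, while for `p ∤ d`
one of them has order `d` and the other `p - 1` have order `p d`. The identities
`p f_β(p d) = p^β f_β(d)` (for `p ∣ d`) and `f_β(d) + (p - 1) f_β(p d) = p^β f_β(d)` (for `p ∤ d`)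
then give the fibre mass `(p m)^{-β} p^β f_β(d) = m^{-β} f_β(d)`.
-/

open Finset

namespace Nat

theorem gcd_mul_eq_gcd_mul_gcd_div_gcd (n a b : ℕ) :
    n.gcd (a * b) = n.gcd a * (n / n.gcd a).gcd b := by
  rcases (n.gcd a).eq_zero_or_pos with hg | hg
  · obtain ⟨rfl, rfl⟩ := Nat.gcd_eq_zero_iff.mp hg
    simp
  have hcop := Nat.coprime_div_gcd_div_gcd hg
  obtain ⟨n', hn'⟩ := n.gcd_dvd_left a
  obtain ⟨a', ha'⟩ := n.gcd_dvd_right a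
  set g := n.gcd a
  rw [hn', Nat.mul_div_cancel_left _ hg] at hcop ⊢
  rw [ha', Nat.mul_div_cancel_left _ hg] at hcop
  rw [ha', mul_assoc, Nat.gcd_mul_left, hcop.symm.gcd_mul_left_cancel_right]

theorem div_gcd_mul_eq_div_gcd_div_gcd (n a b : ℕ) :
    n / n.gcd (a * b) = n / n.gcd a / (n / n.gcd a).gcd b := by
  rw [gcd_mul_eq_gcd_mul_gcd_div_gcd, Nat.div_div_eq_div_mul]

theorem primeFactors_prime_mul {p d : ℕ} (hp : p.Prime) (hd : d ≠ 0) :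
    (p * d).primeFactors = insert p d.primeFactors := by
  rw [primeFactors_mul hp.ne_zero hd, hp.primeFactors, insert_eq]

end Nat

section Monoid

variable {G : Type*} [Monoid G]

theorem pow_pow_eq_self_of_modEq {w : G} {N k c : ℕ} (hw : w ^ N = 1) (hc : k * c ≡ 1 [MOD N]) :
    (w ^ c) ^ k = w := by
  rw [← pow_mul, mul_comm, pow_eq_pow_of_modEq hc hw, pow_one]

theorem eq_pow_of_pow_eq_of_modEq {y w : G} {N k c : ℕ} (hy : y ^ N = 1)
    (hc : k * c ≡ 1 [MOD N]) (h : y ^ k = w) : y = w ^ c := by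
  rw [← h, ← pow_mul, pow_eq_pow_of_modEq hc hy, pow_one]

theorem orderOf_pow_eq_of_pow_pow_eq {w : G} {c k : ℕ} (h : (w ^ c) ^ k = w) :
    orderOf (w ^ c) = orderOf w :=
  (orderOf_pow_dvd c).antisymm (by simpa only [h] using orderOf_pow_dvd (x := w ^ c) k)

theorem orderOf_eq_prime_mul_or_eq {p : ℕ} (hp : p.Prime) {y : G} (hy : IsOfFinOrder y) :
    orderOf y = p * orderOf (y ^ p) ∨ (orderOf y = orderOf (y ^ p) ∧ ¬p ∣ orderOf (y ^ p)) := by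
  rw [hy.orderOf_pow]
  by_cases hpy : p ∣ orderOf y
  · left
    rw [Nat.gcd_eq_right hpy, Nat.mul_div_cancel' hpy]
  · have hcop : (orderOf y).gcd p = 1 := ((hp.coprime_iff_not_dvd).mpr hpy).symm
    right
    rw [hcop, Nat.div_one]
    exact ⟨rfl, hpy⟩

end Monoid

section RootsOfUnity

variable {R : Type*} [CommRing R] [IsDomain R]

theorem pos_of_mem_nthRootsFinset {n : ℕ} {a x : R} (hx : x ∈ nthRootsFinset n a) : 0 < n :=
  Nat.pos_of_ne_zero fun hn => by simp [hn] at hx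

theorem pow_mem_nthRootsFinset_div_gcd {n : ℕ} {z : R} (hz : z ∈ nthRootsFinset n 1) (a : ℕ) :
    z ^ a ∈ nthRootsFinset (n / n.gcd a) 1 := by
  have hn := pos_of_mem_nthRootsFinset hz
  have hg : 0 < n.gcd a := Nat.gcd_pos_of_pos_left a hn
  rw [mem_nthRootsFinset (Nat.div_pos (Nat.gcd_le_left a hn) hg), ← pow_mul,
    ← Nat.mul_div_assoc _ (n.gcd_dvd_left a), mul_comm, Nat.mul_div_assoc _ (n.gcd_dvd_right a),
    pow_mul, (mem_nthRootsFinset hn 1).mp hz, one_pow]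

variable [DecidableEq R]

theorem sum_filter_pow_mul_eq {M : Type*} [AddCommMonoid M] (f : R → M) (n a b : ℕ) (w : R) :
    ∑ z ∈ nthRootsFinset n 1 with z ^ (a * b) = w, f z =
      ∑ y ∈ nthRootsFinset (n / n.gcd a) 1 with y ^ b = w,
        ∑ z ∈ nthRootsFinset n 1 with z ^ a = y, f z := by
  rw [sum_fiberwise_eq_sum_filter]
  refine sum_congr (filter_congr fun z hz => ?_) fun _ _ => rfl
  rw [mem_filter, pow_mul]
  exact (and_iff_right (pow_mem_nthRootsFinset_div_gcd hz a)).symm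

theorem filter_pow_eq_eq_nthRootsFinset {N k : ℕ} (hN : 0 < N) (hk : k ∣ N) {w : R}
    (hw : w ^ (N / k) = 1) : {y ∈ nthRootsFinset N (1 : R) | y ^ k = w} = nthRootsFinset k w := by
  have hk0 : 0 < k := Nat.pos_of_dvd_of_pos hk hN
  ext y
  rw [mem_filter, mem_nthRootsFinset hN, mem_nthRootsFinset hk0]
  refine and_iff_right_of_imp fun hy => ?_
  rw [← Nat.mul_div_cancel' hk, pow_mul, hy, hw]

theorem filter_pow_eq_eq_singleton {N k c : ℕ} (hN : 0 < N) (hc : k * c ≡ 1 [MOD N]) {w : R}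
    (hw : w ^ N = 1) : {y ∈ nthRootsFinset N (1 : R) | y ^ k = w} = {w ^ c} := by
  ext y
  rw [mem_filter, mem_singleton, mem_nthRootsFinset hN]
  refine ⟨fun ⟨hy, hyw⟩ => eq_pow_of_pow_eq_of_modEq hy hc hyw, ?_⟩
  rintro rfl
  exact ⟨by rw [← pow_mul, mul_comm, pow_mul, hw, one_pow], pow_pow_eq_self_of_modEq hw hc⟩

end RootsOfUnity

theorem Complex.card_nthRootsFinset {n : ℕ} (hn : n ≠ 0) {a : ℂ} (ha : a ≠ 0) :
    #(nthRootsFinset n a) = n := by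
  classical
  have hζ := Complex.isPrimitiveRoot_exp n hn
  rw [nthRootsFinset_def, Multiset.toFinset_card_of_nodup (hζ.nthRoots_nodup ha),
    hζ.card_nthRoots, if_pos (IsAlgClosed.exists_pow_nat_eq a (Nat.pos_of_ne_zero hn))]

section Density

variable (β : ℝ) {p d : ℕ}

theorem phiBeta_prime_mul (hp : p.Prime) (hd : d ≠ 0) :
    phiBeta β (p * d) =
      (p : ℝ) ^ β * ((d : ℝ) ^ β * ∏ q ∈ insert p d.primeFactors, (1 - (q : ℝ) ^ (-β))) := by
  rw [phiBeta, Nat.primeFactors_prime_mul hp hd, Nat.cast_mul,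
    Real.mul_rpow (Nat.cast_nonneg p) (Nat.cast_nonneg d), mul_assoc]

theorem phiBeta_prime_mul_of_dvd (hp : p.Prime) (hd : d ≠ 0) (hpd : p ∣ d) :
    phiBeta β (p * d) = (p : ℝ) ^ β * phiBeta β d := by
  rw [phiBeta_prime_mul β hp hd, insert_eq_of_mem (Nat.mem_primeFactors.mpr ⟨hp, hpd, hd⟩),
    phiBeta]

theorem phiBeta_prime_mul_of_not_dvd (hp : p.Prime) (hd : d ≠ 0) (hpd : ¬p ∣ d) :
    phiBeta β (p * d) = ((p : ℝ) ^ β - 1) * phiBeta β d := by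
  have hp0 : (p : ℝ) ^ β ≠ 0 := (Real.rpow_pos_of_pos (Nat.cast_pos.mpr hp.pos) β).ne'
  rw [phiBeta_prime_mul β hp hd, prod_insert fun h => hpd (Nat.dvd_of_mem_primeFactors h), phiBeta,
    Real.rpow_neg (Nat.cast_nonneg p)]
  field_simp

noncomputable def nuDensity (d : ℕ) : ℝ :=
  phiBeta β d / d.totient

theorem nuWeight_eq_mul_nuDensity (m : ℕ) (z : ℂ) :
    nuWeight β m z = (m : ℝ) ^ (-β) * nuDensity β (orderOf z) :=
  mul_div_assoc _ _ _

theorem natCast_mul_nuDensity_prime_mul_of_dvd (hp : p.Prime) (hd : d ≠ 0) (hpd : p ∣ d) :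
    p * nuDensity β (p * d) = (p : ℝ) ^ β * nuDensity β d := by
  have hp0 : (p : ℝ) ≠ 0 := Nat.cast_ne_zero.mpr hp.ne_zero
  rw [nuDensity, nuDensity, phiBeta_prime_mul_of_dvd β hp hd hpd,
    Nat.totient_mul_of_prime_of_dvd hp hpd, Nat.cast_mul]
  field_simp

theorem nuDensity_add_mul_nuDensity_prime_mul_of_not_dvd (hp : p.Prime) (hd : d ≠ 0)
    (hpd : ¬p ∣ d) :
    nuDensity β d + (p - 1) * nuDensity β (p * d) = (p : ℝ) ^ β * nuDensity β d := by
  have hp1 : (p : ℝ) - 1 ≠ 0 := sub_ne_zero.mpr (Nat.one_lt_cast.mpr hp.one_lt).ne'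
  rw [nuDensity, nuDensity, phiBeta_prime_mul_of_not_dvd β hp hd hpd,
    Nat.totient_mul ((hp.coprime_iff_not_dvd).mpr hpd), Nat.totient_prime hp, Nat.cast_mul,
    Nat.cast_pred hp.pos]
  field_simp
  ring

end Density

section Pushforward

variable (β : ℝ) {p : ℕ}

theorem sum_nuDensity_orderOf_nthRootsFinset_prime (hp : p.Prime) {w : ℂ} (hw : IsOfFinOrder w) :
    ∑ y ∈ nthRootsFinset p w, nuDensity β (orderOf y) = (p : ℝ) ^ β * nuDensity β (orderOf w) := by
  set d := orderOf w
  have hd : d ≠ 0 := hw.orderOf_pos.ne'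
  have hwd : w ^ d = 1 := pow_orderOf_eq_one w
  have hcard : #(nthRootsFinset p w) = p := Complex.card_nthRootsFinset hp.ne_zero hw.isUnit.ne_zero
  have hord : ∀ y ∈ nthRootsFinset p w, orderOf y = p * d ∨ (orderOf y = d ∧ ¬p ∣ d) := by
    intro y hy
    rw [mem_nthRootsFinset hp.pos] at hy
    have hy_fin : IsOfFinOrder y := isOfFinOrder_iff_pow_eq_one.mpr
      ⟨p * d, Nat.mul_pos hp.pos hw.orderOf_pos, by rw [pow_mul, hy, hwd]⟩
    simpa only [hy] using orderOf_eq_prime_mul_or_eq hp hy_fin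
  by_cases hpd : p ∣ d
  · rw [sum_congr rfl fun y hy => by rw [(hord y hy).resolve_right fun h => h.2 hpd], sum_const,
      hcard, nsmul_eq_mul, natCast_mul_nuDensity_prime_mul_of_dvd β hp hd hpd]
  -- the unique `p`-th root of `w` of order `d` is `w ^ c` with `c` inverse to `p` modulo `d`
  obtain ⟨c, -, hc⟩ := Nat.exists_mul_mod_eq_of_coprime 1 ((hp.coprime_iff_not_dvd).mpr hpd) hd
  have hroot : (w ^ c) ^ p = w := pow_pow_eq_self_of_modEq hwd hc
  have hmem : w ^ c ∈ nthRootsFinset p w := (mem_nthRootsFinset hp.pos w).mpr hroot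
  have herase : ∀ y ∈ (nthRootsFinset p w).erase (w ^ c), orderOf y = p * d := by
    intro y hy
    obtain ⟨hne, hy⟩ := mem_erase.mp hy
    refine (hord y hy).resolve_right fun h => hne ?_
    rw [mem_nthRootsFinset hp.pos] at hy
    exact eq_pow_of_pow_eq_of_modEq (h.1 ▸ pow_orderOf_eq_one y) hc hy
  rw [← add_sum_erase _ _ hmem, sum_congr rfl fun y hy => by rw [herase y hy], sum_const,
    card_erase_of_mem hmem, hcard, nsmul_eq_mul, Nat.cast_pred hp.pos,
    orderOf_pow_eq_of_pow_pow_eq hroot]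
  exact nuDensity_add_mul_nuDensity_prime_mul_of_not_dvd β hp hd hpd

theorem sum_nuWeight_filter_pow_prime_mul (hp : p.Prime) {M : ℕ} (hM : 0 < M) {w : ℂ}
    (hw : w ^ M = 1) :
    ∑ y ∈ nthRootsFinset (p * M) (1 : ℂ) with y ^ p = w, nuWeight β (p * M) y =
      nuWeight β M w := by
  have hw_fin : IsOfFinOrder w := isOfFinOrder_iff_pow_eq_one.mpr ⟨M, hM, hw⟩
  have hp0 : (p : ℝ) ^ β ≠ 0 := (Real.rpow_pos_of_pos (Nat.cast_pos.mpr hp.pos) β).ne'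
  rw [filter_pow_eq_eq_nthRootsFinset (Nat.mul_pos hp.pos hM) (dvd_mul_right p M)
    (by rwa [Nat.mul_div_cancel_left _ hp.pos])]
  simp only [nuWeight_eq_mul_nuDensity]
  rw [← mul_sum, sum_nuDensity_orderOf_nthRootsFinset_prime β hp hw_fin, ← mul_assoc, Nat.cast_mul,
    Real.mul_rpow (Nat.cast_nonneg p) (Nat.cast_nonneg M), Real.rpow_neg (Nat.cast_nonneg p)]
  field_simp

theorem sum_nuWeight_filter_pow_of_coprime {k N : ℕ} (hk : k.Coprime N) (hN : 0 < N) {w : ℂ}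
    (hw : w ^ N = 1) :
    ∑ y ∈ nthRootsFinset N (1 : ℂ) with y ^ k = w, nuWeight β N y = nuWeight β N w := by
  obtain ⟨c, -, hc⟩ := Nat.exists_mul_mod_eq_of_coprime 1 hk hN.ne'
  rw [filter_pow_eq_eq_singleton hN hc hw, sum_singleton, nuWeight, nuWeight,
    orderOf_pow_eq_of_pow_pow_eq (pow_pow_eq_self_of_modEq hw hc)]

theorem sum_nuWeight_filter_pow_prime (hp : p.Prime) {N : ℕ} {w : ℂ}
    (hw : w ∈ nthRootsFinset (N / N.gcd p) (1 : ℂ)) :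
    ∑ y ∈ nthRootsFinset N (1 : ℂ) with y ^ p = w, nuWeight β N y =
      nuWeight β (N / N.gcd p) w := by
  have hN : 0 < N := Nat.pos_of_div_pos (pos_of_mem_nthRootsFinset hw)
  rw [mem_nthRootsFinset (pos_of_mem_nthRootsFinset hw)] at hw
  by_cases hpN : p ∣ N
  · obtain ⟨M, rfl⟩ := hpN
    rw [Nat.gcd_eq_right (dvd_mul_right p M), Nat.mul_div_cancel_left _ hp.pos] at hw ⊢
    exact sum_nuWeight_filter_pow_prime_mul β hp (Nat.pos_of_mul_pos_left hN) hw
  · have hcop : p.Coprime N := (hp.coprime_iff_not_dvd).mpr hpN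
    rw [hcop.symm, Nat.div_one] at hw ⊢
    exact sum_nuWeight_filter_pow_of_coprime β hcop hN hw

end Pushforward

theorem sum_nuWeight_filter_pow_of_pos (β : ℝ) {k : ℕ} (hk : 0 < k) {n : ℕ} {w : ℂ}
    (hw : w ∈ nthRootsFinset (n / n.gcd k) (1 : ℂ)) :
    ∑ z ∈ nthRootsFinset n (1 : ℂ) with z ^ k = w, nuWeight β n z =
      nuWeight β (n / n.gcd k) w := by
  induction k using induction_on_primes generalizing n w with
  | zero => exact absurd hk (lt_irrefl 0)
  | one =>
    rw [Nat.gcd_one_right, Nat.div_one] at hw ⊢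
    simp only [pow_one, filter_eq', if_pos hw, sum_singleton]
  | prime_mul p a hp ih =>
    rw [Nat.div_gcd_mul_eq_div_gcd_div_gcd] at hw ⊢
    rw [sum_filter_pow_mul_eq, ← ih (Nat.pos_of_mul_pos_left hk) hw]
    exact sum_congr rfl fun y hy => sum_nuWeight_filter_pow_prime β hp (mem_filter.mp hy).1

theorem pushforward_nu_beta_n_general (β : ℝ) (n k : ℕ)
    (w : ℂ) (hw : w ∈ nthRootsFinset (n / Nat.gcd n k) (1 : ℂ)) :
    ∑ z ∈ (nthRootsFinset n (1 : ℂ)).filter (fun z => z ^ k = w), nuWeight β n z =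
      nuWeight β (n / Nat.gcd n k) w := by
  rcases k.eq_zero_or_pos with rfl | hk
  · -- on `n`-th roots of unity the `0`-th and the `n`-th power maps agree
    have hn : 0 < n := Nat.pos_of_div_pos (pos_of_mem_nthRootsFinset hw)
    rw [Nat.gcd_zero_right] at hw ⊢
    have h := sum_nuWeight_filter_pow_of_pos β hn (n := n) (by rwa [Nat.gcd_self])
    rw [Nat.gcd_self] at h
    rw [← h]
    refine sum_congr (filter_congr fun z hz => ?_) fun _ _ => rfl
    rw [pow_zero, (mem_nthRootsFinset hn 1).mp hz]
  · exact sum_nuWeight_filter_pow_of_pos β hk hw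

/-- Pushforward of `ν_{β,n}` under the `k`-th power map is `ν_{β, n/gcd(n,k)}`. -/
theorem pushforward_nu_beta_n (β : ℝ) (hβ : 0 < β) (n k : ℕ) (hn : 0 < n) (hk : 0 < k)
    (w : ℂ) (hw : w ∈ nthRootsFinset (n / Nat.gcd n k) (1 : ℂ)) :
    ∑ z ∈ (nthRootsFinset n (1 : ℂ)).filter (fun z => z ^ k = w), nuWeight β n z =
      nuWeight β (n / Nat.gcd n k) w :=
  pushforward_nu_beta_n_general β n k w hw
end

section
/- For β > 0 and positive integers n, k, the k-th Fourier coefficient of ν_{β,n} is ∑_{z : z^n = 1} z^k · ν_{β,n}({z}) = (n/gcd(n,k))^{-β} · ∑_{d | n/gcd(n,k)} μ(d) φ_β(d)/φ(d). -/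
open Polynomial ArithmeticFunction

/-!
Grouping the `n`-th roots of unity by their order `d`, the sum becomes
`n^{-β} ∑_{d ∣ n} c_d(k) φ_β(d)/φ(d)`, where the Ramanujan sum `c_d(k)` is the sum of the `k`-th
powers of the primitive `d`-th roots of unity; Möbius inversion of the orthogonality relation for
all `d`-th roots gives `c_d(k) = ∑_{e ∣ gcd(d,k)} μ(d/e) e`. As functions of `n`, this divisor sum
and `gcd(n,k)^β ∑_{d ∣ n/gcd(n,k)} μ(d) φ_β(d)/φ(d)` are both multiplicative, and on a prime
power `p^a` both equal `p^{aβ}` if `p^a ∣ k` and `gcd(p^a,k)^β (1 - φ_β(p)/φ(p))` otherwise.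
-/

open Finset

theorem IsPrimitiveRoot.sum_nthRootsFinset_pow {R : Type*} [CommRing R] [IsDomain R] {ζ : R}
    {m : ℕ} (hζ : IsPrimitiveRoot ζ m) (k : ℕ) :
    ∑ z ∈ nthRootsFinset m (1 : R), z ^ k = if m ∣ k then (m : R) else 0 := by
  rcases m.eq_zero_or_pos with rfl | hm
  · simp
  have mem : ∀ {z : R}, z ∈ nthRootsFinset m (1 : R) ↔ z ^ m = 1 :=
    Polynomial.mem_nthRootsFinset hm 1
  split_ifs with hdvd
  · obtain ⟨c, rfl⟩ := hdvd
    rw [sum_congr rfl fun z hz => by rw [pow_mul, mem.1 hz, one_pow], sum_const,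
      hζ.card_nthRootsFinset, nsmul_one]
  -- multiplication by `ζ` permutes the `m`-th roots of unity, and scales the sum by `ζ ^ k ≠ 1`
  have hζm : ζ ^ (m - 1) * ζ = 1 := by rw [← pow_succ, Nat.sub_add_cancel hm, hζ.pow_eq_one]
  have hshift : ∑ z ∈ nthRootsFinset m (1 : R), (ζ * z) ^ k =
      ∑ z ∈ nthRootsFinset m (1 : R), z ^ k :=
    sum_nbij' (ζ * ·) (ζ ^ (m - 1) * ·)
      (fun z hz => mem.2 (by rw [mul_pow, hζ.pow_eq_one, mem.1 hz, one_mul]))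
      (fun z hz => mem.2 (by rw [mul_pow, ← pow_mul, mul_comm (m - 1), pow_mul, hζ.pow_eq_one,
        one_pow, mem.1 hz, one_mul]))
      (fun z _ => by rw [← mul_assoc, hζm, one_mul])
      (fun z _ => by rw [← mul_assoc, mul_comm ζ, hζm, one_mul])
      (fun _ _ => rfl)
  simp_rw [mul_pow, ← mul_sum] at hshift
  have hζk : ζ ^ k - 1 ≠ 0 := sub_ne_zero.2 fun h => hdvd ((hζ.pow_eq_one_iff_dvd k).1 h)
  exact (mul_eq_zero.1 (by linear_combination hshift)).resolve_left hζk

lemma sum_divisors_prime_pow_succ_moebius_mul {R : Type*} [Ring R] {p : ℕ} (hp : p.Prime)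
    (a : ℕ) (f : ℕ → R) : ∑ d ∈ (p ^ (a + 1)).divisors, (moebius d : R) * f d = f 1 - f p := by
  rw [Nat.sum_divisors_prime_pow hp, sum_range_succ', sum_range_succ',
    sum_eq_zero fun i _ => by
      rw [moebius_apply_prime_pow hp (Nat.succ_ne_zero _), if_neg (by omega), Int.cast_zero,
        zero_mul]]
  simp [moebius_apply_prime hp, sub_eq_neg_add]

lemma moebius_mul_apply_prime_pow_succ {R : Type*} [Ring R] {p : ℕ} (hp : p.Prime) (a : ℕ)
    (f : ArithmeticFunction R) :
    ((moebius : ArithmeticFunction R) * f) (p ^ (a + 1)) = f (p ^ (a + 1)) - f (p ^ a) := by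
  rw [mul_apply, Nat.sum_divisorsAntidiagonal fun x y => (moebius : ArithmeticFunction R) x * f y]
  simp only [intCoe_apply]
  rw [sum_divisors_prime_pow_succ_moebius_mul hp a, Nat.div_one, pow_succ,
    Nat.mul_div_cancel _ hp.pos]

lemma zeta_mul_apply_prime_pow_succ {R : Type*} [Semiring R] {p : ℕ} (hp : p.Prime) (a : ℕ)
    (f : ArithmeticFunction R) :
    ((zeta : ArithmeticFunction R) * f) (p ^ (a + 1)) =
      ((zeta : ArithmeticFunction R) * f) (p ^ a) + f (p ^ (a + 1)) := by
  rw [coe_zeta_mul_apply, coe_zeta_mul_apply, Nat.sum_divisors_prime_pow hp,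
    Nat.sum_divisors_prime_pow hp, sum_range_succ]

lemma Nat.gcd_prime_pow_succ_of_not_dvd {p a k : ℕ} (hp : p.Prime) (h : ¬p ^ (a + 1) ∣ k) :
    (p ^ (a + 1)).gcd k = (p ^ a).gcd k := by
  obtain ⟨b, hb, hgcd⟩ := (Nat.dvd_prime_pow hp).1 (Nat.gcd_dvd_left (p ^ (a + 1)) k)
  have hbk : p ^ b ∣ k := hgcd ▸ Nat.gcd_dvd_right _ _
  have hba : b ≤ a := by
    by_contra! hab
    exact h (by rwa [show a + 1 = b by omega])
  refine Nat.dvd_antisymm ?_ (Nat.gcd_dvd_gcd_of_dvd_left k (pow_dvd_pow p a.le_succ))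
  rw [hgcd]
  exact Nat.dvd_gcd (pow_dvd_pow p hba) hbk

def idOfDvd (k : ℕ) : ArithmeticFunction ℤ :=
  ⟨fun e => if e ∣ k then e else 0, by simp⟩

@[simp]
lemma idOfDvd_apply (k e : ℕ) : idOfDvd k e = if e ∣ k then (e : ℤ) else 0 := rfl

lemma isMultiplicative_idOfDvd (k : ℕ) : (idOfDvd k).IsMultiplicative := by
  refine ⟨by simp, fun {m n} h => ?_⟩
  have hdvd : m * n ∣ k ↔ m ∣ k ∧ n ∣ k :=
    ⟨fun hmn => ⟨dvd_of_mul_right_dvd hmn, dvd_of_mul_left_dvd hmn⟩,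
      fun ⟨hm, hn⟩ => h.mul_dvd_of_dvd_of_dvd hm hn⟩
  by_cases hm : m ∣ k <;> by_cases hn : n ∣ k <;> simp [hdvd, hm, hn]

def ramanujanSum (k : ℕ) : ArithmeticFunction ℤ :=
  moebius * idOfDvd k

lemma ramanujanSum_prime_pow_succ (k : ℕ) {p : ℕ} (hp : p.Prime) (a : ℕ) :
    ramanujanSum k (p ^ (a + 1)) = idOfDvd k (p ^ (a + 1)) - idOfDvd k (p ^ a) := by
  rw [ramanujanSum, ← intCoe_int moebius, moebius_mul_apply_prime_pow_succ hp]

lemma isMultiplicative_ramanujanSum (k : ℕ) : (ramanujanSum k).IsMultiplicative :=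
  isMultiplicative_moebius.mul (isMultiplicative_idOfDvd k)

lemma sum_primitiveRoots_pow {d : ℕ} (hd : 0 < d) (k : ℕ) :
    ∑ z ∈ primitiveRoots d ℂ, z ^ k = ramanujanSum k d := by
  have hdivisors : ∀ m > 0, ∑ e ∈ m.divisors, ∑ z ∈ primitiveRoots e ℂ, z ^ k =
      ((idOfDvd k m : ℤ) : ℂ) := fun m hm => by
    rw [← sum_biUnion fun a _ b _ hab => IsPrimitiveRoot.disjoint hab,
      ← IsPrimitiveRoot.nthRoots_one_eq_biUnion_primitiveRoots,
      (Complex.isPrimitiveRoot_exp m hm.ne').sum_nthRootsFinset_pow, idOfDvd_apply]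
    push_cast
    rfl
  rw [← ArithmeticFunction.sum_eq_iff_sum_mul_moebius_eq.1 hdivisors d hd, ramanujanSum,
    mul_apply]
  push_cast
  rfl

lemma sum_nthRootsFinset_pow_mul_orderOf (f : ℕ → ℂ) (n k : ℕ) :
    ∑ z ∈ nthRootsFinset n (1 : ℂ), z ^ k * f (orderOf z) =
      ∑ d ∈ n.divisors, (ramanujanSum k d : ℂ) * f d := by
  rw [IsPrimitiveRoot.nthRoots_one_eq_biUnion_primitiveRoots,
    sum_biUnion fun a _ b _ hab => IsPrimitiveRoot.disjoint hab]
  refine sum_congr rfl fun d hd => ?_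
  rw [← sum_primitiveRoots_pow (Nat.pos_of_mem_divisors hd), sum_mul]
  refine sum_congr rfl fun z hz => ?_
  rw [← (isPrimitiveRoot_of_mem_primitiveRoots hz).eq_orderOf]

lemma phiBeta_mul (β : ℝ) {m n : ℕ} (hm : m ≠ 0) (hn : n ≠ 0) (h : m.Coprime n) :
    phiBeta β (m * n) = phiBeta β m * phiBeta β n := by
  rw [phiBeta, phiBeta, phiBeta, Nat.primeFactors_mul hm hn,
    prod_union h.disjoint_primeFactors, Nat.cast_mul,
    Real.mul_rpow (Nat.cast_nonneg m) (Nat.cast_nonneg n)]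
  ring

lemma phiBeta_prime_pow_succ (β : ℝ) {p : ℕ} (hp : p.Prime) (a : ℕ) :
    phiBeta β (p ^ (a + 1)) = ((p : ℝ) ^ a) ^ β * ((p : ℝ) ^ β - 1) := by
  have hp0 : (0 : ℝ) < p := Nat.cast_pos.mpr hp.pos
  rw [phiBeta, Nat.primeFactors_prime_pow a.succ_ne_zero hp, prod_singleton, Nat.cast_pow,
    pow_succ, Real.mul_rpow (by positivity) hp0.le, Real.rpow_neg hp0.le]
  field_simp [(Real.rpow_pos_of_pos hp0 β).ne']

noncomputable def phiBetaRatio (β : ℝ) : ArithmeticFunction ℝ :=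
  ⟨fun d => phiBeta β d / d.totient, by simp⟩

lemma phiBetaRatio_apply (β : ℝ) (d : ℕ) : phiBetaRatio β d = phiBeta β d / d.totient := rfl

lemma isMultiplicative_phiBetaRatio (β : ℝ) : (phiBetaRatio β).IsMultiplicative := by
  refine IsMultiplicative.iff_ne_zero.2
    ⟨by simp [phiBetaRatio_apply, phiBeta], fun {m n} hm hn h => ?_⟩
  rw [phiBetaRatio_apply, phiBeta_mul β hm hn h, Nat.totient_mul h, Nat.cast_mul,
    mul_div_mul_comm]
  rfl

lemma phiBetaRatio_prime_pow_succ (β : ℝ) {p : ℕ} (hp : p.Prime) (a : ℕ) :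
    phiBetaRatio β (p ^ (a + 1)) =
      ((p : ℝ) ^ a) ^ β * ((p : ℝ) ^ β - 1) / ((p : ℝ) ^ a * ((p : ℝ) - 1)) := by
  rw [phiBetaRatio_apply, phiBeta_prime_pow_succ β hp, Nat.totient_prime_pow_succ hp,
    Nat.cast_mul, Nat.cast_pow, Nat.cast_sub hp.one_le, Nat.cast_one]

lemma phiBetaRatio_prime (β : ℝ) {p : ℕ} (hp : p.Prime) :
    phiBetaRatio β p = ((p : ℝ) ^ β - 1) / ((p : ℝ) - 1) := by
  simpa using phiBetaRatio_prime_pow_succ β hp 0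

noncomputable def phiBetaMoebiusSum (β : ℝ) : ArithmeticFunction ℝ :=
  (zeta : ArithmeticFunction ℝ) * (moebius : ArithmeticFunction ℝ).pmul (phiBetaRatio β)

lemma phiBetaMoebiusSum_apply (β : ℝ) (m : ℕ) :
    phiBetaMoebiusSum β m = ∑ d ∈ m.divisors, (moebius d : ℝ) * phiBetaRatio β d := by
  simp only [phiBetaMoebiusSum, coe_zeta_mul_apply, pmul_apply, intCoe_apply]

lemma isMultiplicative_phiBetaMoebiusSum (β : ℝ) : (phiBetaMoebiusSum β).IsMultiplicative :=
  isMultiplicative_zeta.natCast.mul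
    (isMultiplicative_moebius.intCast.pmul (isMultiplicative_phiBetaRatio β))

lemma phiBetaMoebiusSum_prime_pow_succ (β : ℝ) {p : ℕ} (hp : p.Prime) (a : ℕ) :
    phiBetaMoebiusSum β (p ^ (a + 1)) = 1 - phiBetaRatio β p := by
  rw [phiBetaMoebiusSum_apply, sum_divisors_prime_pow_succ_moebius_mul hp,
    (isMultiplicative_phiBetaRatio β).map_one]

noncomputable def ramanujanPhiBetaSum (β : ℝ) (k : ℕ) : ArithmeticFunction ℝ :=
  (zeta : ArithmeticFunction ℝ) * (ramanujanSum k : ArithmeticFunction ℝ).pmul (phiBetaRatio β)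

lemma ramanujanPhiBetaSum_apply (β : ℝ) (k n : ℕ) :
    ramanujanPhiBetaSum β k n =
      ∑ d ∈ n.divisors, (ramanujanSum k d : ℝ) * phiBetaRatio β d := by
  simp only [ramanujanPhiBetaSum, coe_zeta_mul_apply, pmul_apply, intCoe_apply]

lemma isMultiplicative_ramanujanPhiBetaSum (β : ℝ) (k : ℕ) :
    (ramanujanPhiBetaSum β k).IsMultiplicative :=
  isMultiplicative_zeta.natCast.mul
    ((isMultiplicative_ramanujanSum k).intCast.pmul (isMultiplicative_phiBetaRatio β))

lemma ramanujanPhiBetaSum_prime_pow (β : ℝ) (k : ℕ) {p : ℕ} (hp : p.Prime) (a : ℕ) :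
    ramanujanPhiBetaSum β k (p ^ a) =
      if p ^ a ∣ k then ((p ^ a : ℕ) : ℝ) ^ β
      else (((p ^ a).gcd k : ℕ) : ℝ) ^ β * (1 - phiBetaRatio β p) := by
  have hp0 : (p : ℝ) ≠ 0 := Nat.cast_ne_zero.2 hp.ne_zero
  have hp1 : (p : ℝ) - 1 ≠ 0 := sub_ne_zero.2 (Nat.one_lt_cast.2 hp.one_lt).ne'
  induction a with
  | zero => simp [(isMultiplicative_ramanujanPhiBetaSum β k).map_one]
  | succ a ih =>
    rw [ramanujanPhiBetaSum, zeta_mul_apply_prime_pow_succ hp, ← ramanujanPhiBetaSum, ih,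
      pmul_apply, intCoe_apply, ramanujanSum_prime_pow_succ k hp, idOfDvd_apply, idOfDvd_apply]
    by_cases hsucc : p ^ (a + 1) ∣ k
    · have ha : p ^ a ∣ k := (pow_dvd_pow p a.le_succ).trans hsucc
      simp only [if_pos hsucc, if_pos ha, phiBetaRatio_prime_pow_succ β hp]
      push_cast
      rw [pow_succ, Real.mul_rpow (by positivity) (Nat.cast_nonneg p)]
      field_simp
      ring
    · rw [Nat.gcd_prime_pow_succ_of_not_dvd hp hsucc]
      by_cases ha : p ^ a ∣ k
      · simp only [if_neg hsucc, if_pos ha, Nat.gcd_eq_left ha, phiBetaRatio_prime_pow_succ β hp,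
          phiBetaRatio_prime β hp]
        push_cast
        field_simp
        ring
      · simp [hsucc, ha]

noncomputable def ramanujanPhiBetaSumClosedForm (β : ℝ) (k : ℕ) : ArithmeticFunction ℝ :=
  ⟨fun n => ((n.gcd k : ℕ) : ℝ) ^ β * phiBetaMoebiusSum β (n / n.gcd k), by simp⟩

lemma ramanujanPhiBetaSumClosedForm_apply (β : ℝ) (k n : ℕ) :
    ramanujanPhiBetaSumClosedForm β k n =
      ((n.gcd k : ℕ) : ℝ) ^ β * phiBetaMoebiusSum β (n / n.gcd k) := rfl

lemma isMultiplicative_ramanujanPhiBetaSumClosedForm (β : ℝ) (k : ℕ) :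
    (ramanujanPhiBetaSumClosedForm β k).IsMultiplicative := by
  refine IsMultiplicative.iff_ne_zero.2
    ⟨by simp [ramanujanPhiBetaSumClosedForm_apply,
      (isMultiplicative_phiBetaMoebiusSum β).map_one], fun {m n} hm hn h => ?_⟩
  have hm' := Nat.gcd_dvd_left m k
  have hn' := Nat.gcd_dvd_left n k
  simp only [ramanujanPhiBetaSumClosedForm_apply]
  rw [Nat.gcd_comm (m * n), h.gcd_mul k, Nat.gcd_comm k, Nat.gcd_comm k,
    ← Nat.div_mul_div_comm hm' hn', (isMultiplicative_phiBetaMoebiusSum β).map_mul_of_coprime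
      ((h.coprime_div_left hm').coprime_div_right hn'), Nat.cast_mul,
    Real.mul_rpow (Nat.cast_nonneg _) (Nat.cast_nonneg _)]
  ring

lemma ramanujanPhiBetaSumClosedForm_prime_pow (β : ℝ) (k : ℕ) {p : ℕ} (hp : p.Prime) (a : ℕ) :
    ramanujanPhiBetaSumClosedForm β k (p ^ a) =
      if p ^ a ∣ k then ((p ^ a : ℕ) : ℝ) ^ β
      else (((p ^ a).gcd k : ℕ) : ℝ) ^ β * (1 - phiBetaRatio β p) := by
  rw [ramanujanPhiBetaSumClosedForm_apply]
  split_ifs with h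
  · rw [Nat.gcd_eq_left h, Nat.div_self (pow_pos hp.pos a),
      (isMultiplicative_phiBetaMoebiusSum β).map_one, mul_one]
  · obtain ⟨b, hb, hgcd⟩ := (Nat.dvd_prime_pow hp).1 (Nat.gcd_dvd_left (p ^ a) k)
    have hba : b ≠ a := fun hab => h (hab ▸ hgcd ▸ Nat.gcd_dvd_right _ _)
    obtain ⟨c, hc⟩ : ∃ c, a - b = c + 1 := ⟨a - b - 1, by omega⟩
    rw [hgcd, Nat.pow_div hb hp.pos, hc, phiBetaMoebiusSum_prime_pow_succ β hp]

theorem ramanujanPhiBetaSum_eq_closedForm (β : ℝ) (k : ℕ) :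
    ramanujanPhiBetaSum β k = ramanujanPhiBetaSumClosedForm β k :=
  (IsMultiplicative.eq_iff_eq_on_prime_powers _ (isMultiplicative_ramanujanPhiBetaSum β k) _
    (isMultiplicative_ramanujanPhiBetaSumClosedForm β k)).2 fun p a hp => by
      rw [ramanujanPhiBetaSum_prime_pow β k hp, ramanujanPhiBetaSumClosedForm_prime_pow β k hp]

theorem fourier_coeff_nu_beta_n_general (β : ℝ) (n k : ℕ) (hn : 0 < n) :
    ∑ z ∈ nthRootsFinset n (1 : ℂ), z ^ k * (nuWeight β n z : ℂ) =
      (((n / Nat.gcd n k : ℕ) : ℝ) ^ (-β) *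
        ∑ d ∈ (n / Nat.gcd n k).divisors,
          (moebius d : ℝ) * phiBeta β d / (Nat.totient d : ℝ) : ℝ) := by
  have hg : (0 : ℝ) < n.gcd k := Nat.cast_pos.2 (Nat.gcd_pos_of_pos_left k hn)
  have hscale : (n : ℝ) ^ (-β) * (n.gcd k : ℝ) ^ β = ((n / n.gcd k : ℕ) : ℝ) ^ (-β) := by
    have hn_eq : (n : ℝ) = ((n / n.gcd k : ℕ) : ℝ) * n.gcd k := by
      exact_mod_cast (Nat.div_mul_cancel (Nat.gcd_dvd_left n k)).symm
    rw [hn_eq, Real.mul_rpow (Nat.cast_nonneg _) hg.le, Real.rpow_neg hg.le, mul_assoc,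
      inv_mul_cancel₀ (Real.rpow_pos_of_pos hg β).ne', mul_one]
  have hweight : ∀ z : ℂ, (nuWeight β n z : ℂ) =
      (((n : ℝ) ^ (-β) : ℝ) : ℂ) * (phiBetaRatio β (orderOf z) : ℂ) := fun z => by
    rw [nuWeight, mul_div_assoc, Complex.ofReal_mul, phiBetaRatio_apply]
  calc ∑ z ∈ nthRootsFinset n (1 : ℂ), z ^ k * (nuWeight β n z : ℂ)
      = (((n : ℝ) ^ (-β) * ramanujanPhiBetaSum β k n : ℝ) : ℂ) := by
        simp_rw [hweight, mul_left_comm _ (((n : ℝ) ^ (-β) : ℝ) : ℂ), ← mul_sum,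
          sum_nthRootsFinset_pow_mul_orderOf (fun d => (phiBetaRatio β d : ℂ)),
          ramanujanPhiBetaSum_apply]
        push_cast
        rfl
    _ = _ := by
        rw [ramanujanPhiBetaSum_eq_closedForm, ramanujanPhiBetaSumClosedForm_apply,
          ← mul_assoc, hscale, phiBetaMoebiusSum_apply]
        simp_rw [phiBetaRatio_apply, mul_div_assoc]

/-- The `k`-th Fourier coefficient of `ν_{β,n}`. -/
theorem fourier_coeff_nu_beta_n (β : ℝ) (hβ : 0 < β) (n k : ℕ) (hn : 0 < n) (hk : 0 < k) :
    ∑ z ∈ nthRootsFinset n (1 : ℂ), z ^ k * (nuWeight β n z : ℂ) =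
      (((n / Nat.gcd n k : ℕ) : ℝ) ^ (-β) *
        ∑ d ∈ (n / Nat.gcd n k).divisors,
          (moebius d : ℝ) * phiBeta β d / (Nat.totient d : ℝ) : ℝ) :=
  fourier_coeff_nu_beta_n_general β n k hn
end

section
/- Let (a_n) be a sequence with 0 ≤ a_n ≤ 1 such that (1/log n) ∑_{m=1}^n a_m/m → 0 as n → ∞. Then (∏_{p ≤ p_n} (1 − 1/p)) · ∑_{m ∈ ℕ×_n} a_m/m → 0 as n → ∞, where p_n is the n-th prime and ℕ×_n is the set of positive integers all of whose prime factors are at most p_n. -/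
/-!
Rankin's trick. Let `y = p_n`, `σ = 1 / log y` and `X = y ^ u`, and split the sum over
`y`-smooth `m` at `X`. The part `m ≤ X` is `o(log X) = o(u log y)` by hypothesis, while
`∏_{p ≤ y} (1 - 1/p) ≤ 1 / log y` because the harmonic sum up to `y` is dominated by the Euler
product. For `m > X` we have `1/m ≤ X^{-σ} m^{σ-1} = e^{-u} m^{σ-1}`, so the tail is at most
`e^{-u} ∏_{p ≤ y} (1 - p^{σ-1})⁻¹`. Each ratio `(1 - 1/p) / (1 - p^{σ-1})` is
`exp (O (log p / (p log y)))`, and Chebyshev's bound `∑_{p ≤ y} log p / p ≤ log y + log 4`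
(from Legendre's formula for `y!`) makes the product of the ratios `O(1)`. So the limit superior
is `O(e^{-u})` for every `u`.
-/

open Filter

/-- The set of `p_n`-smooth positive integers, where `p_n` is the `n`-th prime. -/
def smoothNums (n : ℕ) : Set ℕ :=
  {m | 0 < m ∧ ∀ p : ℕ, p.Prime → p ∣ m → p ≤ Nat.nth Nat.Prime n}

open Real Finset

lemma Nat.div_le_factorization_factorial {p n : ℕ} (hp : p.Prime) (hpn : p ≤ n) :
    n / p ≤ n.factorial.factorization p := by
  rw [Nat.factorization_factorial hp (Nat.lt_succ_self _)]
  simpa using single_le_sum (f := fun i => n / p ^ i) (fun _ _ => Nat.zero_le _)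
    (mem_Ico.2 ⟨le_rfl, Nat.succ_lt_succ (Nat.log_pos hp.one_lt hpn)⟩)

lemma log_factorial_eq_sum_primesLE (n : ℕ) :
    log n.factorial = ∑ p ∈ n.primesLE, n.factorial.factorization p * log p := by
  rw [log_nat_eq_sum_factorization]
  refine Finsupp.sum_of_support_subset _ (fun p hp => ?_) _ (fun _ _ => by simp)
  have hp' := Nat.prime_of_mem_primeFactors hp
  exact Nat.mem_primesLE.2 ⟨hp'.dvd_factorial.1 (Nat.dvd_of_mem_primeFactors hp), hp'⟩

lemma sum_primesLE_log_div_le (y : ℕ) : ∑ p ∈ y.primesLE, log p / p ≤ log y + log 4 := by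
  rcases Nat.eq_zero_or_pos y with rfl | hy
  · simp [Nat.primesLE_zero]; positivity
  have hy' : (0 : ℝ) < y := by exact_mod_cast hy
  have hterm : ∀ p ∈ y.primesLE,
      y * (log p / p) ≤ y.factorial.factorization p * log p + log p := by
    intro p hp
    obtain ⟨hpy, hp⟩ := Nat.mem_primesLE.1 hp
    have hdiv : (y : ℝ) / p - 1 ≤ y.factorial.factorization p :=
      calc (y : ℝ) / p - 1 ≤ (y / p : ℕ) := by
            rw [← Nat.floor_div_eq_div (K := ℝ)]; exact (Nat.sub_one_lt_floor _).le
        _ ≤ _ := by exact_mod_cast Nat.div_le_factorization_factorial hp hpy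
    have hlogp : 0 ≤ log p := log_nonneg (by exact_mod_cast hp.one_lt.le)
    linarith [mul_le_mul_of_nonneg_right hdiv hlogp,
      show (y : ℝ) * (log p / p) = (y / p - 1) * log p + log p by ring]
  have hfact : log y.factorial ≤ y * log y := by
    rw [← log_pow]; gcongr; exact_mod_cast Nat.factorial_le_pow y
  have htheta := Chebyshev.theta_le_log4_mul_x hy'.le
  rw [Chebyshev.theta_eq_sum_primesLE_log] at htheta
  have hsum := sum_le_sum hterm
  rw [← mul_sum, sum_add_distrib, ← log_factorial_eq_sum_primesLE] at hsum
  refine le_of_mul_le_mul_left ?_ hy'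
  rw [mul_add]; linarith

lemma rpow_sub_one_le_two_thirds {p σ : ℝ} (hp : 2 ≤ p) (hσ : σ ≤ 1 / 3) :
    p ^ (σ - 1) ≤ 2 / 3 := by
  calc p ^ (σ - 1) ≤ 2 ^ (σ - 1) := rpow_le_rpow_of_nonpos two_pos hp (by linarith)
    _ ≤ 2 ^ (-2 / 3 : ℝ) := rpow_le_rpow_of_exponent_le one_le_two (by linarith)
    _ ≤ 2 / 3 := by
      rw [← pow_le_pow_iff_left₀ (by positivity) (by norm_num) three_ne_zero,
        ← rpow_natCast, ← rpow_mul two_pos.le]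
      norm_num

lemma one_sub_inv_le_one_sub_rpow_mul_exp {p σ : ℝ} (hp : 2 ≤ p) (hσ : 0 ≤ σ)
    (hσ3 : σ ≤ 1 / 3) (hσp : σ * log p ≤ 1) :
    1 - 1 / p ≤ (1 - p ^ (σ - 1)) * exp (6 * (σ * log p) / p) := by
  have hp0 : 0 < p := by linarith
  set x := σ * log p
  have hx0 : 0 ≤ x := mul_nonneg hσ (log_nonneg (by linarith))
  have hq : p ^ (σ - 1) = exp x / p := by
    rw [rpow_sub_one hp0.ne', rpow_def_of_pos hp0, mul_comm]
  have hq23 := rpow_sub_one_le_two_thirds hp hσ3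
  have hexp : exp x - 1 ≤ 2 * x := by
    have := abs_exp_sub_one_le (x := x) (by rwa [abs_of_nonneg hx0])
    rwa [abs_of_nonneg hx0, abs_of_nonneg (by linarith [add_one_le_exp x])] at this
  -- with `q = p ^ (σ - 1)`: `1 - 1/p = (1 - q) + (q - 1/p)`, `q - 1/p ≥ 0` and `3 (1 - q) ≥ 1`
  have hgap : 0 ≤ exp x / p - 1 / p := by
    rw [← sub_div]; exact div_nonneg (by linarith [add_one_le_exp x]) hp0.le
  calc 1 - 1 / p ≤ (1 - p ^ (σ - 1)) * (1 + 3 * (exp x / p - 1 / p)) := by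
        rw [hq] at hq23 ⊢; nlinarith
    _ ≤ (1 - p ^ (σ - 1)) * (1 + 6 * x / p) := by
        have : 3 * (exp x / p - 1 / p) ≤ 6 * x / p := by
          rw [← sub_div, mul_div_assoc']
          exact div_le_div_of_nonneg_right (by linarith) hp0.le
        gcongr; linarith
    _ ≤ (1 - p ^ (σ - 1)) * exp (6 * x / p) := by
        gcongr
        · linarith
        · exact add_comm (6 * x / p) 1 ▸ add_one_le_exp _

lemma tsum_div_le_sum_Icc_add_rpow_mul_tsum {s : Set ℕ} {a : ℕ → ℝ}
    (ha : ∀ m, 0 ≤ a m ∧ a m ≤ 1) {X σ : ℝ} (hX : 0 < X) (hσ : 0 ≤ σ)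
    (hs : Summable (fun m : s => (m : ℝ) ^ (σ - 1))) :
    ∑' m : s, a m / m ≤
      ∑ m ∈ Icc 1 ⌊X⌋₊, a m / m + X ^ (-σ) * ∑' m : s, (m : ℝ) ^ (σ - 1) := by
  set head := Set.indicator (↑(Icc 1 ⌊X⌋₊)) (fun m : ℕ => a m / m)
  have hhead : Summable head :=
    summable_of_ne_finset_zero fun m hm => Set.indicator_of_notMem hm _
  have hhead_nonneg : ∀ m, 0 ≤ head m :=
    Set.indicator_nonneg fun m _ => div_nonneg (ha m).1 m.cast_nonneg
  have hbound : ∀ m : ℕ, a m / m ≤ head m + X ^ (-σ) * (m : ℝ) ^ (σ - 1) := by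
    intro m
    have htail : 0 ≤ X ^ (-σ) * (m : ℝ) ^ (σ - 1) := by positivity
    dsimp only [head]
    by_cases hm : m ∈ Icc 1 ⌊X⌋₊
    · rw [Set.indicator_of_mem (by exact_mod_cast hm)]; linarith
    rw [Set.indicator_of_notMem (by exact_mod_cast hm), zero_add]
    rcases Nat.eq_zero_or_pos m with rfl | hm1
    · simpa using htail
    have hXm : X < m := by
      simp only [mem_Icc, not_and, not_le] at hm
      exact Nat.lt_of_floor_lt (hm hm1)
    have hm0 : (0 : ℝ) < m := by exact_mod_cast hm1
    calc a m / m ≤ 1 / m := div_le_div_of_nonneg_right (ha m).2 hm0.le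
      _ ≤ (m : ℝ) ^ σ / X ^ σ / m := by
        gcongr
        rw [one_le_div (rpow_pos_of_pos hX σ)]
        exact rpow_le_rpow hX.le hXm.le hσ
      _ = X ^ (-σ) * (m : ℝ) ^ (σ - 1) := by
        rw [rpow_neg hX.le, rpow_sub_one hm0.ne']; ring
  have hhead_s : Summable (fun m : s => head m) := hhead.subtype s
  have hsum : Summable (fun m : s => head m + X ^ (-σ) * (m : ℝ) ^ (σ - 1)) :=
    hhead_s.add (hs.mul_left _)
  calc ∑' m : s, a m / m ≤ ∑' m : s, (head m + X ^ (-σ) * (m : ℝ) ^ (σ - 1)) :=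
        Summable.tsum_le_tsum (fun m => hbound m)
          (hsum.of_nonneg_of_le (fun m => div_nonneg (ha m).1 m.1.cast_nonneg) fun m => hbound m)
          hsum
    _ = ∑' m : s, head m + X ^ (-σ) * ∑' m : s, (m : ℝ) ^ (σ - 1) := by
        rw [hhead_s.tsum_add (hs.mul_left _), tsum_mul_left]
    _ ≤ ∑ m ∈ Icc 1 ⌊X⌋₊, a m / m + X ^ (-σ) * ∑' m : s, (m : ℝ) ^ (σ - 1) := by
        rw [sum_eq_tsum_indicator]
        gcongr
        exact hhead.tsum_subtype_le _ s hhead_nonneg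

noncomputable def natRpowHom (c : ℝ) : ℕ →* ℝ where
  toFun m := (m : ℝ) ^ c
  map_one' := by simp
  map_mul' m n := by push_cast; exact mul_rpow m.cast_nonneg n.cast_nonneg

@[simp]
lemma natRpowHom_apply (c : ℝ) (m : ℕ) : natRpowHom c m = (m : ℝ) ^ c := rfl

lemma hasSum_rpow_smoothNumbers {c : ℝ} (hc : c < 0) (N : ℕ) :
    HasSum (fun m : N.smoothNumbers => (m : ℝ) ^ c)
      (∏ p ∈ N.primesBelow, (1 - (p : ℝ) ^ c)⁻¹) := by
  have hlt : ∀ {p : ℕ}, p.Prime → ‖natRpowHom c p‖ < 1 := fun hp => by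
    rw [natRpowHom_apply, norm_of_nonneg (rpow_nonneg (Nat.cast_nonneg _) c)]
    exact rpow_lt_one_of_one_lt_of_neg (by exact_mod_cast hp.one_lt) hc
  simpa using (EulerProduct.summable_and_hasSum_smoothNumbers_prod_primesBelow_geometric hlt N).2

lemma prod_primesLE_one_sub_inv_pos (y : ℕ) : 0 < ∏ p ∈ y.primesLE, (1 - 1 / (p : ℝ)) :=
  prod_pos fun p hp => by
    have : (1 : ℝ) < p := by exact_mod_cast (Nat.prime_of_mem_primesBelow hp).one_lt
    rw [sub_pos, div_lt_one (by linarith)]; exact this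

lemma log_mul_prod_primesLE_one_sub_inv_le_one (y : ℕ) :
    log y * ∏ p ∈ y.primesLE, (1 - 1 / (p : ℝ)) ≤ 1 := by
  have hEuler : HasSum ((y + 1).smoothNumbers.indicator (fun m : ℕ => 1 / (m : ℝ)))
      (1 / ∏ p ∈ y.primesLE, (1 - 1 / (p : ℝ))) := by
    rw [← hasSum_subtype_iff_indicator]
    convert hasSum_rpow_smoothNumbers (c := -1) (by norm_num) (y + 1) using 1
    · ext m; simp [rpow_neg_one]
    · simp [rpow_neg_one, prod_inv_distrib, Nat.primesLE]
  rw [← le_div_iff₀ (prod_primesLE_one_sub_inv_pos y)]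
  calc log y ≤ harmonic y := by simpa using log_le_harmonic_floor y y.cast_nonneg
    _ = ∑ m ∈ Icc 1 y, (y + 1).smoothNumbers.indicator (fun m : ℕ => 1 / (m : ℝ)) m := by
      rw [harmonic_eq_sum_Icc]; push_cast
      refine sum_congr rfl fun m hm => ?_
      obtain ⟨hm1, hmy⟩ := mem_Icc.1 hm
      rw [Set.indicator_of_mem (Nat.mem_smoothNumbers_of_lt hm1 (Nat.lt_succ_of_le hmy)), one_div]
    _ ≤ 1 / ∏ p ∈ y.primesLE, (1 - 1 / (p : ℝ)) :=
      sum_le_hasSum _ (fun m _ => Set.indicator_nonneg (fun m _ => by positivity) m) hEuler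

lemma prod_primesLE_one_sub_rpow_pos (y : ℕ) {σ : ℝ} (hσ3 : σ ≤ 1 / 3) :
    0 < ∏ p ∈ y.primesLE, (1 - (p : ℝ) ^ (σ - 1)) :=
  prod_pos fun p hp => by
    linarith [rpow_sub_one_le_two_thirds (p := (p : ℝ))
      (by exact_mod_cast (Nat.prime_of_mem_primesBelow hp).two_le) hσ3]

lemma prod_primesLE_one_sub_inv_le_exp_mul_prod {y : ℕ} {σ : ℝ} (hσ : 0 ≤ σ)
    (hσ3 : σ ≤ 1 / 3) (hσy : σ * log y ≤ 1) :
    ∏ p ∈ y.primesLE, (1 - 1 / (p : ℝ)) ≤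
      exp (6 * σ * (log y + log 4)) * ∏ p ∈ y.primesLE, (1 - (p : ℝ) ^ (σ - 1)) := by
  have hfactor : ∀ p ∈ y.primesLE,
      1 - 1 / (p : ℝ) ≤ (1 - (p : ℝ) ^ (σ - 1)) * exp (6 * (σ * log p) / p) := by
    intro p hp
    obtain ⟨hpy, hp⟩ := Nat.mem_primesLE.1 hp
    refine one_sub_inv_le_one_sub_rpow_mul_exp (by exact_mod_cast hp.two_le) hσ hσ3 ?_
    refine le_trans (mul_le_mul_of_nonneg_left (log_le_log ?_ ?_) hσ) hσy
    · exact_mod_cast hp.pos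
    · exact_mod_cast hpy
  calc ∏ p ∈ y.primesLE, (1 - 1 / (p : ℝ))
      ≤ ∏ p ∈ y.primesLE, ((1 - (p : ℝ) ^ (σ - 1)) * exp (6 * (σ * log p) / p)) := by
        refine prod_le_prod (fun p hp => ?_) hfactor
        have : (1 : ℝ) ≤ p := by exact_mod_cast (Nat.prime_of_mem_primesBelow hp).one_lt.le
        rw [sub_nonneg, div_le_one (by linarith)]; exact this
    _ = exp (6 * σ * ∑ p ∈ y.primesLE, log p / p) *
          ∏ p ∈ y.primesLE, (1 - (p : ℝ) ^ (σ - 1)) := by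
        rw [prod_mul_distrib, ← exp_sum, mul_sum, mul_comm]
        congr 2; exact sum_congr rfl fun p _ => by ring
    _ ≤ _ := by
        gcongr
        · exact (prod_primesLE_one_sub_rpow_pos y hσ3).le
        · exact sum_primesLE_log_div_le y

lemma prod_primesLE_mul_prod_inv_one_sub_rpow_le {y : ℕ} (hy : 3 ≤ log y) :
    (∏ p ∈ y.primesLE, (1 - 1 / (p : ℝ))) *
        ∏ p ∈ y.primesLE, (1 - (p : ℝ) ^ ((log y)⁻¹ - 1))⁻¹ ≤
      exp (6 + 2 * log 4) := by
  set σ := (log y)⁻¹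
  have hσ0 : 0 ≤ σ := by positivity
  have hσ3 : σ ≤ 1 / 3 := by rw [inv_le_comm₀ (by linarith) (by norm_num)]; linarith
  have hσy : σ * log y = 1 := inv_mul_cancel₀ (by linarith)
  have hpos := prod_primesLE_one_sub_rpow_pos y hσ3
  rw [prod_inv_distrib, ← div_eq_mul_inv, div_le_iff₀ hpos]
  refine (prod_primesLE_one_sub_inv_le_exp_mul_prod hσ0 hσ3 hσy.le).trans ?_
  gcongr
  nlinarith [log_nonneg (show (1 : ℝ) ≤ 4 by norm_num)]

lemma prod_primesLE_mul_le_of_log_le {y M : ℕ} {u S : ℝ} (hu : 0 ≤ u) (hS : 0 ≤ S)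
    (hM : 0 < log M) (hMy : log M ≤ u * log y) :
    (∏ p ∈ y.primesLE, (1 - 1 / (p : ℝ))) * S ≤ u * (1 / log M * S) := by
  set P := ∏ p ∈ y.primesLE, (1 - 1 / (p : ℝ))
  have hP := prod_primesLE_one_sub_inv_pos y
  have hPM : P * log M ≤ u :=
    calc P * log M ≤ u * (log y * P) := by nlinarith
      _ ≤ u := mul_le_of_le_one_right hu (log_mul_prod_primesLE_one_sub_inv_le_one y)
  calc P * S = (P * log M) * (1 / log M * S) := by field_simp
    _ ≤ u * (1 / log M * S) := by gcongr

lemma prod_primesLE_mul_tsum_smoothNumbers_le {a : ℕ → ℝ}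
    (ha : ∀ m, 0 ≤ a m ∧ a m ≤ 1) {y : ℕ} (hy : 3 ≤ log y) {u : ℝ} (hu : 1 ≤ u) :
    (∏ p ∈ y.primesLE, (1 - 1 / (p : ℝ))) * ∑' m : (y + 1).smoothNumbers, a m / m ≤
      u * (1 / log ⌊exp (u * log y)⌋₊ * ∑ m ∈ Icc 1 ⌊exp (u * log y)⌋₊, a m / m) +
        exp (6 + 2 * log 4) * exp (-u) := by
  set L := log y
  set σ := L⁻¹
  set M := ⌊exp (u * L)⌋₊
  have hσL : σ * L = 1 := inv_mul_cancel₀ (by linarith)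
  have hσ3 : σ ≤ 1 / 3 := by rw [inv_le_comm₀ (by linarith) (by norm_num)]; linarith
  have hEuler := hasSum_rpow_smoothNumbers (c := σ - 1) (by linarith) (y + 1)
  have hsplit := tsum_div_le_sum_Icc_add_rpow_mul_tsum (s := (y + 1).smoothNumbers) ha
    (exp_pos (u * L)) (by positivity) hEuler.summable
  have hXσ : exp (u * L) ^ (-σ) = exp (-u) := by
    rw [← exp_mul]; congr 1; linear_combination (-u) * hσL
  rw [hEuler.tsum_eq, hXσ] at hsplit
  have hy0 : (0 : ℝ) < y := by linarith [(log_pos_iff y.cast_nonneg).1 (by linarith)]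
  have hyM : (y : ℝ) ≤ M := by
    refine Nat.cast_le.2 (Nat.le_floor ?_)
    calc (y : ℝ) = exp L := (exp_log hy0).symm
      _ ≤ exp (u * L) := exp_le_exp.2 (by nlinarith)
  have hMu : log M ≤ u * L := by
    rw [← log_exp (u * L)]
    exact log_le_log (hy0.trans_le hyM) (Nat.floor_le (exp_pos _).le)
  have hhead := prod_primesLE_mul_le_of_log_le (y := y) (S := ∑ m ∈ Icc 1 M, a m / m)
    (by linarith) (sum_nonneg fun m _ => div_nonneg (ha m).1 m.cast_nonneg)
    (by linarith [log_le_log hy0 hyM]) hMu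
  have htail := prod_primesLE_mul_prod_inv_one_sub_rpow_le hy
  calc _ ≤ (∏ p ∈ y.primesLE, (1 - 1 / (p : ℝ))) * (∑ m ∈ Icc 1 M, a m / m +
          exp (-u) * ∏ p ∈ y.primesLE, (1 - (p : ℝ) ^ (σ - 1))⁻¹) := by
        gcongr
        · exact (prod_primesLE_one_sub_inv_pos y).le
        · exact hsplit
    _ ≤ _ := by nlinarith [exp_pos (-u)]

lemma smoothNums_eq_smoothNumbers (n : ℕ) :
    smoothNums n = (Nat.nth Nat.Prime n + 1).smoothNumbers := by
  ext m
  constructor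
  · rintro ⟨-, hm⟩
    exact Nat.mem_smoothNumbers'.2 fun p hp hpm => Nat.lt_succ_of_le (hm p hp hpm)
  · intro hm
    exact ⟨Nat.pos_of_ne_zero hm.1,
      fun p hp hpm => Nat.lt_succ_iff.1 (Nat.mem_smoothNumbers'.1 hm p hp hpm)⟩

theorem smooth_partial_sum_tendsto_zero (a : ℕ → ℝ)
    (ha : ∀ m, 0 ≤ a m ∧ a m ≤ 1)
    (h : Tendsto (fun n : ℕ => (1 / Real.log n) * ∑ m ∈ Finset.Icc 1 n, a m / m)
      atTop (nhds 0)) :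
    Tendsto (fun n : ℕ =>
        (∏ p ∈ (Finset.range (Nat.nth Nat.Prime n + 1)).filter Nat.Prime,
            (1 - 1 / (p : ℝ))) *
          ∑' m : smoothNums n, a m / (m : ℝ))
      atTop (nhds 0) := by
  have hlog : Tendsto (fun n => log (Nat.nth Nat.Prime n : ℝ)) atTop atTop :=
    tendsto_log_atTop.comp (tendsto_natCast_atTop_atTop.comp
      (Nat.nth_strictMono Nat.infinite_setOfPred_prime).tendsto_atTop)
  have hnonneg (n : ℕ) : 0 ≤ (∏ p ∈ (Nat.nth Nat.Prime n).primesLE, (1 - 1 / (p : ℝ))) *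
      ∑' m : smoothNums n, a m / (m : ℝ) :=
    mul_nonneg (prod_primesLE_one_sub_inv_pos _).le
      (tsum_nonneg fun m => div_nonneg (ha m).1 (Nat.cast_nonneg _))
  refine tendsto_order.2
    ⟨fun b hb => .of_forall fun n => hb.trans_le (hnonneg n), fun ε hε => ?_⟩
  set C := exp (6 + 2 * log 4)
  obtain ⟨u, hCu, hu⟩ := (((tendsto_exp_neg_atTop_nhds_zero.const_mul C).eventually
    (gt_mem_nhds (show C * 0 < ε / 2 by linarith))).and (eventually_ge_atTop 1)).exists
  have hM : Tendsto (fun n => ⌊exp (u * log (Nat.nth Nat.Prime n))⌋₊) atTop atTop :=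
    tendsto_nat_floor_atTop.comp (tendsto_exp_atTop.comp (hlog.const_mul_atTop (by linarith)))
  filter_upwards [(h.comp hM).eventually (gt_mem_nhds (show 0 < ε / 2 / u by positivity)),
    hlog.eventually_ge_atTop 3] with n hn hn3
  rw [smoothNums_eq_smoothNumbers]
  calc _ ≤ _ := prod_primesLE_mul_tsum_smoothNumbers_le ha hn3 hu
    _ < u * (ε / 2 / u) + ε / 2 := by gcongr; exact hn
    _ = ε := by field_simp; ring
end

section
/- Let n ≥ 1, let z be a primitive n-th root of unity, and for β > 1 define the probability measure T_β δ_z on 𝕋 by T_β δ_z = ζ(β)^{-1} ∑_{c=1}^∞ c^{-β} δ_{z^c}. Then as β → 1⁺, T_β δ_z converges weakly-* to the uniform measure (1/n) ∑_{k=1}^n δ_{z^k} on the cyclic group generated by z. -/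
open Filter Real

noncomputable def Zf (β : ℝ) : ℝ := ∑' c : ℕ, ((c + 1 : ℕ) : ℝ) ^ (-β)

lemma summable_w {β : ℝ} (hβ : 1 < β) :
    Summable (fun c : ℕ => ((c + 1 : ℕ) : ℝ) ^ (-β)) := by
  have h : Summable (fun c : ℕ => ((c : ℝ)) ^ (-β)) :=
    Real.summable_nat_rpow.mpr (by linarith)
  have := (summable_nat_add_iff 1).mpr h
  simpa using this

lemma summable_S {β : ℝ} (hβ : 1 < β) (n j : ℕ) (hn : 0 < n) :
    Summable (fun m : ℕ => ((m * n + j + 1 : ℕ) : ℝ) ^ (-β)) := by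
  refine Summable.of_nonneg_of_le (fun m => Real.rpow_nonneg (by positivity) _)
    (fun m => ?_) (summable_w hβ)
  apply Real.rpow_le_rpow_of_nonpos (by positivity) ?_ (by linarith)
  have : m + 1 ≤ m * n + j + 1 := by nlinarith
  exact_mod_cast this

lemma Zf_pos {β : ℝ} (hβ : 1 < β) : 0 < Zf β := by
  have h := summable_w hβ
  have : (0:ℝ) < ((0 + 1 : ℕ):ℝ) ^ (-β) := Real.rpow_pos_of_pos (by norm_num) _
  refine this.trans_le ?_
  exact Summable.le_tsum h 0 (fun c _ => Real.rpow_nonneg (by positivity) _)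

lemma nZ_eq {β : ℝ} (hβ : 1 < β) (n : ℕ) (hn : 0 < n) :
    (n:ℝ) ^ (-β) * Zf β = ∑' m : ℕ, (((m + 1) * n : ℕ) : ℝ) ^ (-β) := by
  rw [Zf, ← tsum_mul_left]
  congr 1; ext m
  push_cast
  rw [← Real.mul_rpow (by positivity) (by positivity), mul_comm]

lemma S_lower {β : ℝ} (hβ : 1 < β) (n j : ℕ) (hn : 0 < n) (hj : j < n) :
    (n:ℝ) ^ (-β) * Zf β ≤ ∑' m : ℕ, ((m * n + j + 1 : ℕ) : ℝ) ^ (-β) := by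
  rw [nZ_eq hβ n hn]
  refine Summable.tsum_le_tsum (fun m => ?_) ?_ (summable_S hβ n j hn)
  · apply Real.rpow_le_rpow_of_nonpos (by positivity) ?_ (by linarith)
    have : m * n + j + 1 ≤ (m + 1) * n := by nlinarith
    exact_mod_cast this
  · refine ((summable_w hβ).mul_left ((n:ℝ)^(-β))).congr fun m => ?_
    push_cast
    rw [← Real.mul_rpow (by positivity) (by positivity), mul_comm]

lemma S_upper {β : ℝ} (hβ : 1 < β) (n j : ℕ) (hn : 0 < n) (hj : j < n) :
    ∑' m : ℕ, ((m * n + j + 1 : ℕ) : ℝ) ^ (-β) ≤ 1 + (n:ℝ) ^ (-β) * Zf β := by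
  have hS := summable_S hβ n j hn
  rw [Summable.tsum_eq_zero_add hS]
  gcongr
  · simp only [Nat.zero_mul, Nat.zero_add]
    exact Real.rpow_le_one_of_one_le_of_nonpos (by exact_mod_cast Nat.one_le_iff_ne_zero.mpr (by omega)) (by linarith)
  · rw [nZ_eq hβ n hn]
    refine Summable.tsum_le_tsum (fun m => ?_) ((summable_nat_add_iff 1).mpr hS) ?_
    · apply Real.rpow_le_rpow_of_nonpos (by positivity) ?_ (by linarith)
      have : (m + 1) * n ≤ (m + 1) * n + j + 1 := by omega
      exact_mod_cast this
    · refine ((summable_w hβ).mul_left ((n:ℝ)^(-β))).congr fun m => ?_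
      push_cast
      rw [← Real.mul_rpow (by positivity) (by positivity), mul_comm]

lemma Zf_atTop : Tendsto Zf (nhdsWithin 1 (Set.Ioi 1)) atTop := by
  rw [tendsto_atTop]
  intro M
  obtain ⟨N, hN⟩ := (Real.tendsto_sum_range_one_div_nat_succ_atTop.eventually_ge_atTop (M + 1)).exists
  have hcont : Tendsto (fun β : ℝ => ∑ i ∈ Finset.range N, ((i + 1 : ℕ) : ℝ) ^ (-β)) (nhds 1)
      (nhds (∑ i ∈ Finset.range N, ((i + 1 : ℕ) : ℝ) ^ (-(1:ℝ)))) :=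
    tendsto_finset_sum _ fun i _ =>
      (Real.continuousAt_const_rpow (by positivity : ((i+1:ℕ):ℝ) ≠ 0)).comp continuousAt_id.neg
  have h1 : (∑ i ∈ Finset.range N, ((i + 1 : ℕ) : ℝ) ^ (-(1:ℝ))) ≥ M + 1 := by
    refine le_trans hN (le_of_eq ?_)
    refine Finset.sum_congr rfl fun i _ => ?_
    rw [Real.rpow_neg_one]
    push_cast
    rw [one_div]
  have hev : ∀ᶠ β in nhds (1:ℝ), M < ∑ i ∈ Finset.range N, ((i + 1 : ℕ) : ℝ) ^ (-β) := by
    have hlt : M < ∑ i ∈ Finset.range N, ((i + 1 : ℕ) : ℝ) ^ (-(1:ℝ)) := by linarith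
    exact hcont.eventually (eventually_gt_nhds hlt)
  filter_upwards [nhdsWithin_le_nhds hev, self_mem_nhdsWithin] with β hβM hβ
  have : (∑ i ∈ Finset.range N, ((i + 1 : ℕ) : ℝ) ^ (-β)) ≤ Zf β :=
    Summable.sum_le_tsum _ (fun i _ => Real.rpow_nonneg (by positivity) _) (summable_w hβ)
  linarith

lemma ratio_tendsto (n j : ℕ) (hn : 0 < n) (hj : j < n) :
    Tendsto (fun β : ℝ => (Zf β)⁻¹ * ∑' m : ℕ, ((m * n + j + 1 : ℕ) : ℝ) ^ (-β))
      (nhdsWithin 1 (Set.Ioi 1)) (nhds (1 / (n:ℝ))) := by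
  have hlow : Tendsto (fun β : ℝ => (n:ℝ) ^ (-β)) (nhdsWithin 1 (Set.Ioi 1)) (nhds (1/(n:ℝ))) := by
    have hc : ContinuousAt (fun β : ℝ => (n:ℝ) ^ (-β)) 1 :=
      (Real.continuousAt_const_rpow (by positivity : (n:ℝ) ≠ 0)).comp continuousAt_id.neg
    have h2 := hc.tendsto.mono_left (nhdsWithin_le_nhds (s := Set.Ioi 1))
    simpa [Real.rpow_neg_one, one_div] using h2
  have hinv : Tendsto (fun β => (Zf β)⁻¹) (nhdsWithin 1 (Set.Ioi 1)) (nhds 0) :=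
    Zf_atTop.inv_tendsto_atTop
  have hup : Tendsto (fun β => (n:ℝ)^(-β) + (Zf β)⁻¹) (nhdsWithin 1 (Set.Ioi 1))
      (nhds (1/(n:ℝ))) := by
    simpa using hlow.add hinv
  refine tendsto_of_tendsto_of_tendsto_of_le_of_le' hlow hup ?_ ?_
  · filter_upwards [self_mem_nhdsWithin] with β hβ
    have hβ : (1:ℝ) < β := hβ
    have hZ := Zf_pos hβ
    have := S_lower hβ n j hn hj
    rw [le_inv_mul_iff₀ hZ]
    linarith [this, mul_comm (Zf β) ((n:ℝ)^(-β))]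
  · filter_upwards [self_mem_nhdsWithin] with β hβ
    have hβ : (1:ℝ) < β := hβ
    have hZ := Zf_pos hβ
    have := S_upper hβ n j hn hj
    rw [inv_mul_le_iff₀ hZ]
    have h2 : Zf β * ((n:ℝ)^(-β) + (Zf β)⁻¹) = (n:ℝ)^(-β) * Zf β + 1 := by
      field_simp
    rw [h2]
    linarith

lemma rearrange {β : ℝ} (hβ : 1 < β) (n : ℕ) (hn : 0 < n) (z : Circle)
    (hzn : z ^ n = 1) (f : C(Circle, ℝ)) :
    ∑' c : ℕ, ((c + 1 : ℕ) : ℝ) ^ (-β) * f (z ^ (c + 1)) =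
      ∑ j ∈ Finset.range n, f (z ^ (j + 1)) *
        ∑' m : ℕ, ((m * n + j + 1 : ℕ) : ℝ) ^ (-β) := by
  haveI : NeZero n := ⟨hn.ne'⟩
  set G : ℕ → ℝ := fun c => ((c + 1 : ℕ) : ℝ) ^ (-β) * f (z ^ (c + 1)) with hG
  have hGsum : Summable G := by
    refine Summable.of_norm ?_
    refine Summable.of_nonneg_of_le (fun c => norm_nonneg _) (fun c => ?_)
      ((summable_w hβ).mul_right ‖f‖)
    rw [hG, norm_mul, Real.norm_eq_abs, abs_of_nonneg (Real.rpow_nonneg (by positivity) _)]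
    exact mul_le_mul_of_nonneg_left (f.norm_coe_le_norm _)
      (Real.rpow_nonneg (by positivity) _)
  set e2 : Fin n × ℕ ≃ ℕ := (Equiv.prodComm _ _).trans (Nat.divModEquiv n).symm with he2
  have he2app : ∀ (j : Fin n) (m : ℕ), e2 (j, m) = m * n + (j : ℕ) := fun j m => rfl
  have hsum2 : Summable (fun p : Fin n × ℕ => G (e2 p)) := hGsum.comp_injective e2.injective
  have key : ∑' c : ℕ, G c = ∑' p : Fin n × ℕ, G (e2 p) := (e2.tsum_eq G).symm
  have hinner : ∀ j : ℕ, j < n →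
      ∑' m : ℕ, G (m * n + j) =
        f (z ^ (j + 1)) * ∑' m : ℕ, ((m * n + j + 1 : ℕ) : ℝ) ^ (-β) := by
    intro j hj
    have hzp : ∀ m : ℕ, z ^ (m * n + j + 1) = z ^ (j + 1) := by
      intro m
      rw [show m * n + j + 1 = n * m + (j + 1) by ring, pow_add, pow_mul, hzn, one_pow, one_mul]
    have : ∀ m : ℕ, G (m * n + j) = ((m * n + j + 1 : ℕ) : ℝ) ^ (-β) * f (z ^ (j + 1)) := by
      intro m
      simp only [hG]
      rw [hzp m]
    rw [tsum_congr this, tsum_mul_right, mul_comm]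
  have hfib : ∀ b : Fin n, Summable fun c => G (e2 (b, c)) := by
    intro b
    refine hGsum.comp_injective fun m₁ m₂ h => ?_
    simpa using e2.injective (a₁ := (b, m₁)) (a₂ := (b, m₂)) (by simpa using h)
  rw [key, Summable.tsum_prod' hsum2 hfib, tsum_fintype]
  rw [show (fun j : Fin n => ∑' m : ℕ, G (e2 (j, m))) =
      (fun j : Fin n => f (z ^ ((j : ℕ) + 1)) * ∑' m : ℕ, ((m * n + (j : ℕ) + 1 : ℕ) : ℝ) ^ (-β))
      from funext fun j => hinner j j.2]
  exact Fin.sum_univ_eq_sum_range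
    (fun j => f (z ^ (j + 1)) * ∑' m : ℕ, ((m * n + j + 1 : ℕ) : ℝ) ^ (-β)) n

/-- As `β → 1⁺`, the measures `T_β δ_z = ζ(β)^{-1} ∑_c c^{-β} δ_{z^c}` converge weakly-*
to the uniform measure on the cyclic group generated by the primitive `n`-th root of
unity `z` (stated via integration against continuous functions). -/
theorem Tbeta_dirac_tendsto_uniform (n : ℕ) (hn : 0 < n) (z : Circle)
    (hz : IsPrimitiveRoot z n) :
    ∀ f : C(Circle, ℝ),
      Tendsto (fun β : ℝ =>
          (∑' c : ℕ, ((c + 1 : ℕ) : ℝ) ^ (-β))⁻¹ *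
            ∑' c : ℕ, ((c + 1 : ℕ) : ℝ) ^ (-β) * f (z ^ (c + 1)))
        (nhdsWithin 1 (Set.Ioi 1))
        (nhds ((1 / (n : ℝ)) * ∑ k ∈ Finset.range n, f (z ^ (k + 1)))) := by
  intro f
  have hlim : Tendsto (fun β : ℝ => ∑ j ∈ Finset.range n,
      f (z ^ (j + 1)) * ((Zf β)⁻¹ * ∑' m : ℕ, ((m * n + j + 1 : ℕ) : ℝ) ^ (-β)))
      (nhdsWithin 1 (Set.Ioi 1))
      (nhds (∑ j ∈ Finset.range n, f (z ^ (j + 1)) * (1 / (n:ℝ)))) :=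
    tendsto_finset_sum _ fun j hj =>
      tendsto_const_nhds.mul (ratio_tendsto n j hn (Finset.mem_range.mp hj))
  have hconst : (∑ j ∈ Finset.range n, f (z ^ (j + 1)) * (1 / (n:ℝ)))
      = (1 / (n:ℝ)) * ∑ k ∈ Finset.range n, f (z ^ (k + 1)) := by
    rw [Finset.mul_sum]
    exact Finset.sum_congr rfl fun j _ => mul_comm _ _
  rw [← hconst]
  refine Tendsto.congr' ?_ hlim
  filter_upwards [self_mem_nhdsWithin] with β hβ
  have hβ' : (1:ℝ) < β := hβ
  have hZdef : (∑' c : ℕ, ((c + 1 : ℕ) : ℝ) ^ (-β)) = Zf β := rfl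
  rw [hZdef, rearrange hβ' n hn z (hz.pow_eq_one) f, Finset.mul_sum]
  exact Finset.sum_congr rfl fun j _ => by ring
end
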